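/- arXiv:1710.08872 — 10 statements merged into one kernel-verified Lean document; each statement's English description precedes it below -/
import Mathlib

section
/- Let q be a prime power with q > 2 and let n ≥ 1. Then every matrix in Mat_n(F_q) can be written as a sum of two invertible matrices. -/
/-!
Since `F` has at least three elements, for each `i` some `d i` avoids both `0` and `M i i`.
Take for `A` the lower triangular part of `M` with its diagonal replaced by `d`. Then `A` is
lower triangular with diagonal `d` and `M - A` is upper triangular with diagonal `M i i - d i`,
so both determinants are products of nonzero elements.
-/

namespace Matrix

variable {ι R : Type*} [LinearOrder ι]

def lowerTriangularWithDiag [Zero R] (M : Matrix ι ι R) (d : ι → R) : Matrix ι ι R :=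
  of fun i j => if i < j then 0 else if i = j then d i else M i j

theorem isLowerTriangular_lowerTriangularWithDiag [Zero R] (M : Matrix ι ι R) (d : ι → R) :
    (M.lowerTriangularWithDiag d).IsLowerTriangular := fun i j hij => by
  simp only [lowerTriangularWithDiag, of_apply, OrderDual.toDual_lt_toDual] at hij ⊢
  rw [if_pos hij]

theorem isUpperTriangular_sub_lowerTriangularWithDiag [AddGroup R] (M : Matrix ι ι R)
    (d : ι → R) :
    (M - M.lowerTriangularWithDiag d).IsUpperTriangular := fun i j hij => by
  simp only [id_eq] at hij
  simp [lowerTriangularWithDiag, not_lt.mpr hij.le, hij.ne']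

variable [Fintype ι] [CommRing R] (M : Matrix ι ι R) (d : ι → R)

theorem det_lowerTriangularWithDiag : (M.lowerTriangularWithDiag d).det = ∏ i, d i := by
  rw [det_of_isLowerTriangular _ (isLowerTriangular_lowerTriangularWithDiag M d)]
  simp [lowerTriangularWithDiag]

theorem det_sub_lowerTriangularWithDiag :
    (M - M.lowerTriangularWithDiag d).det = ∏ i, (M i i - d i) := by
  rw [det_of_isUpperTriangular (isUpperTriangular_sub_lowerTriangularWithDiag M d)]
  simp [lowerTriangularWithDiag]

theorem exists_isUnit_det_add_of_isUnit_diag (hd : ∀ i, IsUnit (d i))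
    (hMd : ∀ i, IsUnit (M i i - d i)) :
    ∃ A B : Matrix ι ι R, IsUnit A.det ∧ IsUnit B.det ∧ M = A + B :=
  ⟨M.lowerTriangularWithDiag d, M - M.lowerTriangularWithDiag d,
    by simpa [det_lowerTriangularWithDiag] using hd,
    by simpa [det_sub_lowerTriangularWithDiag] using hMd,
    by abel⟩

end Matrix

theorem stmt_4_general (F : Type) [Field F] [Fintype F] (hq : 2 < Fintype.card F)
    (n : ℕ) (M : Matrix (Fin n) (Fin n) F) :
    ∃ A B : Matrix (Fin n) (Fin n) F, A.det ≠ 0 ∧ B.det ≠ 0 ∧ M = A + B := by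
  have hF : 3 ≤ ENat.card F := by
    rw [ENat.card_eq_coe_fintype_card]
    exact_mod_cast hq
  choose d hd0 hdM using fun i => ENat.exists_ne_ne_of_three_le hF 0 (M i i)
  obtain ⟨A, B, hA, hB, rfl⟩ := M.exists_isUnit_det_add_of_isUnit_diag d
    (fun i => (hd0 i).isUnit) (fun i => (sub_ne_zero.mpr (hdM i).symm).isUnit)
  exact ⟨A, B, hA.ne_zero, hB.ne_zero, rfl⟩

theorem stmt_4 (F : Type) [Field F] [Fintype F] (hq : 2 < Fintype.card F)
    (n : ℕ) (hn : 1 ≤ n) (M : Matrix (Fin n) (Fin n) F) :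
    ∃ A B : Matrix (Fin n) (Fin n) F, A.det ≠ 0 ∧ B.det ≠ 0 ∧ M = A + B :=
  stmt_4_general F hq n M
end

section
/- Let n ≥ 2. Then every matrix in Mat_n(F_2) can be written as a sum of two invertible matrices. -/
/-!
Over a field of characteristic 2, write `M = E * diagonal d * F` with `E`, `F` products of
transvections. Let `C` be the permutation matrix of the cyclic shift `i ↦ i + 1`. In the Leibniz
expansion of `det (diagonal a + C)` only the identity and the inverse shift survive, so this
determinant is `∏ i, a i + 1`. Splitting `d = a + b` with `a 0 = 0` and `b 1 = 0` therefore gives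
`diagonal d = (diagonal a + C) + (diagonal b + C)` with both summands of determinant `1`.
-/

open Finset

open Fin.CommRing in
theorem Equiv.Perm.eq_one_or_eq_finRotate_inv {n : ℕ} [NeZero n] {σ : Equiv.Perm (Fin n)}
    (h : ∀ i, σ i = i ∨ σ i + 1 = i) : σ = 1 ∨ σ = (finRotate n)⁻¹ := by
  by_cases hfix : ∃ j, σ j = j
  · left
    obtain ⟨j, hj⟩ := hfix
    have step (i : Fin n) (hi : σ i = i) : σ (i + 1) = i + 1 := by
      rcases h (i + 1) with h' | h'
      · exact h'
      · have hcycle : i + 1 = i := σ.injective (add_right_cancel h' |>.trans hi.symm)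
        rw [hcycle, hi]
    have hj' (k : ℕ) : σ (j + (k : Fin n)) = j + (k : Fin n) := by
      induction k with
      | zero => simpa using hj
      | succ k ih => simpa [add_assoc] using step _ ih
    exact Equiv.ext fun i => by simpa using hj' (i - j).val
  · right
    push Not at hfix
    exact eq_inv_of_mul_eq_one_right <| Equiv.ext fun i => by
      simpa [finRotate_apply] using (h i).resolve_left (hfix i)

namespace Matrix

variable {R : Type*} [CommRing R]

theorem det_diagonal_add_permMatrix_finRotate {m : ℕ} (d : Fin (m + 2) → R) :
    (diagonal d + (finRotate (m + 2)).permMatrix R).det = ∏ i, d i + (-1) ^ (m + 1) := by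
  set A := diagonal d + (finRotate (m + 2)).permMatrix R
  have hA (i j : Fin (m + 2)) :
      A i j = (if i = j then d i else 0) + (if i + 1 = j then 1 else 0) := by
    simp [A, diagonal_apply, PEquiv.toMatrix_apply, finRotate_apply]
  have h10 : (1 : Fin (m + 2)) ≠ 0 := by simp
  rw [det_apply, Fintype.sum_eq_add 1 (finRotate (m + 2))⁻¹]
  · have hdiag (i : Fin (m + 2)) : A i i = d i := by simp [hA, h10]
    have hsub (i : Fin (m + 2)) : A (i - 1) i = 1 := by simp [hA, h10]
    simp [hdiag, hsub, Equiv.Perm.sign_inv, sign_finRotate, Units.smul_def]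
  · intro h
    simpa using congrArg (· 0) h
  · intro σ ⟨h1, hrot⟩
    obtain ⟨i, hi, hi'⟩ : ∃ i, σ i ≠ i ∧ σ i + 1 ≠ i := by
      by_contra! hall
      exact (Equiv.Perm.eq_one_or_eq_finRotate_inv fun i => or_iff_not_imp_left.2 (hall i)).elim
        h1 hrot
    rw [prod_eq_zero (mem_univ i) (by simp [hA, hi, hi']), smul_zero]

theorem exists_det_eq_one_diagonal_eq_add [CharP R 2] {m : ℕ} (d : Fin (m + 2) → R) :
    ∃ A B : Matrix (Fin (m + 2)) (Fin (m + 2)) R, A.det = 1 ∧ B.det = 1 ∧ diagonal d = A + B := by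
  set C := (finRotate (m + 2)).permMatrix R
  have hdet (a : Fin (m + 2) → R) (i : Fin (m + 2)) (ha : a i = 0) : (diagonal a + C).det = 1 := by
    rw [det_diagonal_add_permMatrix_finRotate, prod_eq_zero (mem_univ i) ha, CharTwo.neg_eq,
      one_pow, zero_add]
  refine ⟨diagonal (d - Pi.single 0 (d 0)) + C, diagonal (Pi.single 0 (d 0)) + C,
    hdet _ 0 (by simp), hdet _ 1 (by simp), ?_⟩
  rw [add_add_add_comm, CharTwo.add_self_eq_zero, add_zero, diagonal_add]
  simp

theorem exists_det_eq_one_eq_add {K : Type*} [Field K] [CharP K 2] {m : ℕ}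
    (M : Matrix (Fin (m + 2)) (Fin (m + 2)) K) :
    ∃ A B : Matrix (Fin (m + 2)) (Fin (m + 2)) K, A.det = 1 ∧ B.det = 1 ∧ M = A + B := by
  obtain ⟨L, L', d, rfl⟩ := Pivot.exists_list_transvec_mul_diagonal_mul_list_transvec M
  obtain ⟨A, B, hA, hB, hd⟩ := exists_det_eq_one_diagonal_eq_add d
  refine ⟨_ * A * _, _ * B * _, ?_, ?_, by rw [hd, Matrix.mul_add, Matrix.add_mul]⟩ <;>
    simp [hA, hB, TransvectionStruct.det_toMatrix_prod]

end Matrix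

theorem stmt_7 (n : ℕ) (hn : 2 ≤ n) (M : Matrix (Fin n) (Fin n) (ZMod 2)) :
    ∃ A B : Matrix (Fin n) (Fin n) (ZMod 2), A.det ≠ 0 ∧ B.det ≠ 0 ∧ M = A + B := by
  obtain ⟨m, rfl⟩ : ∃ m, n = m + 2 := ⟨n - 2, by omega⟩
  obtain ⟨A, B, hA, hB, hM⟩ := Matrix.exists_det_eq_one_eq_add M
  exact ⟨A, B, by simp [hA], by simp [hB], hM⟩
end

section
/- Let q be a prime power and n ≥ 1, and assume it is not the case that both n = 1 and q = 2. Then every matrix in Mat_n(F_q) can be written as a sum of two invertible matrices. -/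
/-!
Over a field, `M = P * diagonal d * Q` with `P`, `Q` products of transvections. When `n ≠ 1` there
is a fixed-point-free permutation `σ`, and `diagonal d * Pσ` has zero diagonal; a matrix `X` with
zero diagonal splits as `(1 + U) + (X - U - 1)` with `U` its strictly upper triangular part, a sum
of two triangular matrices with diagonals `1` and `-1`. For `n = 1` one needs a scalar outside
`{0, m}`, which exists as soon as the field has more than two elements.
-/

open Matrix

theorem Equiv.Perm.exists_forall_apply_ne {α : Type*} [Fintype α] (hα : Fintype.card α ≠ 1) :
    ∃ σ : Equiv.Perm α, ∀ a, σ a ≠ a := by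
  obtain ⟨σ, hσ⟩ : ∃ σ : Equiv.Perm (Fin (Fintype.card α)), ∀ i, σ i ≠ i := by
    match Fintype.card α, hα with
    | 0, _ => exact ⟨1, fun i => i.elim0⟩
    | m + 2, _ => exact ⟨finRotate (m + 2), fun i => by simp [finRotate_apply]⟩
  refine ⟨(Fintype.equivFin α).symm.permCongr σ, fun a ha => hσ (Fintype.equivFin α a) ?_⟩
  simpa [Equiv.permCongr_apply, Equiv.symm_apply_eq] using ha

namespace Matrix

variable {ι R K : Type*} [Fintype ι] [LinearOrder ι] [CommRing R] [Field K]

theorem exists_isUnit_det_add_of_diag_eq_zero {X : Matrix ι ι R} (hX : ∀ i, X i i = 0) :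
    ∃ A B : Matrix ι ι R, IsUnit A.det ∧ IsUnit B.det ∧ X = A + B := by
  let U : Matrix ι ι R := of fun i j => if i < j then X i j else 0
  refine ⟨1 + U, X - U - 1, ?_, ?_, by abel⟩
  · have hU : (1 + U).IsUpperTriangular := fun i j (hji : j < i) => by
      simp [U, one_apply_ne hji.ne', not_lt_of_gt hji]
    simp [det_of_isUpperTriangular hU, U]
  · have hL : (X - U - 1).IsLowerTriangular := fun i j (hij : i < j) => by
      simp [U, one_apply_ne hij.ne, hij]
    simp [det_of_isLowerTriangular _ hL, U, hX, IsUnit.pow]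

theorem exists_isUnit_det_add_mul_mul {P X Q : Matrix ι ι R} (hP : IsUnit P.det)
    (hQ : IsUnit Q.det) (hX : ∃ A B : Matrix ι ι R, IsUnit A.det ∧ IsUnit B.det ∧ X = A + B) :
    ∃ A B : Matrix ι ι R, IsUnit A.det ∧ IsUnit B.det ∧ P * X * Q = A + B := by
  obtain ⟨A, B, hA, hB, rfl⟩ := hX
  refine ⟨P * A * Q, P * B * Q, ?_, ?_, by rw [Matrix.mul_add, Matrix.add_mul]⟩ <;>
    simp only [det_mul] <;> apply_rules [IsUnit.mul]

theorem exists_isUnit_det_add_of_card_ne_one (hι : Fintype.card ι ≠ 1) (M : Matrix ι ι K) :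
    ∃ A B : Matrix ι ι K, IsUnit A.det ∧ IsUnit B.det ∧ M = A + B := by
  obtain ⟨σ, hσ⟩ := Equiv.Perm.exists_forall_apply_ne hι
  obtain ⟨L, L', d, rfl⟩ := Pivot.exists_list_transvec_mul_diagonal_mul_list_transvec M
  -- a fixed-point-free column permutation moves the diagonal off the diagonal
  have hd : diagonal d = diagonal d * σ.permMatrix K * σ⁻¹.permMatrix K := by
    rw [Matrix.mul_assoc, ← permMatrix_mul, inv_mul_cancel, permMatrix_one, Matrix.mul_one]
  have hX : ∀ i, (diagonal d * σ.permMatrix K) i i = 0 := fun i => by simp [hσ]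
  rw [hd, show ∀ P X S Q : Matrix ι ι K, P * (X * S) * Q = P * X * (S * Q) by
    simp [Matrix.mul_assoc]]
  refine exists_isUnit_det_add_mul_mul ?_ ?_ (exists_isUnit_det_add_of_diag_eq_zero hX)
  · simp [TransvectionStruct.det_toMatrix_prod]
  · rw [det_mul, det_permutation, TransvectionStruct.det_toMatrix_prod, mul_one]
    exact (Units.isUnit _).map (Int.castRingHom K)

theorem exists_isUnit_det_add_of_unique [Unique ι] [Fintype K] (hK : 2 < Fintype.card K)
    (M : Matrix ι ι K) :
    ∃ A B : Matrix ι ι K, IsUnit A.det ∧ IsUnit B.det ∧ M = A + B := by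
  classical
  obtain ⟨a, -, ha⟩ := Finset.exists_mem_notMem_of_card_lt_card
    (Finset.card_le_two.trans_lt hK : ({0, M default default} : Finset K).card < Finset.univ.card)
  rw [Finset.mem_insert, Finset.mem_singleton, not_or] at ha
  refine ⟨scalar ι a, M - scalar ι a, ?_, ?_, by abel⟩
  · simpa [det_unique] using ha.1
  · simpa [det_unique, sub_eq_zero, eq_comm] using ha.2

end Matrix

theorem stmt_8_general (F : Type) [Field F] [Fintype F] (n : ℕ)
    (h : ¬(n = 1 ∧ Fintype.card F = 2)) (M : Matrix (Fin n) (Fin n) F) :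
    ∃ A B : Matrix (Fin n) (Fin n) F, A.det ≠ 0 ∧ B.det ≠ 0 ∧ M = A + B := by
  suffices ∃ A B : Matrix (Fin n) (Fin n) F, IsUnit A.det ∧ IsUnit B.det ∧ M = A + B by
    obtain ⟨A, B, hA, hB, hM⟩ := this
    exact ⟨A, B, hA.ne_zero, hB.ne_zero, hM⟩
  by_cases hn : n = 1
  · subst hn
    have hF : 1 < Fintype.card F := Fintype.one_lt_card
    exact exists_isUnit_det_add_of_unique (by omega) M
  · exact exists_isUnit_det_add_of_card_ne_one (by simpa) M

theorem stmt_8 (F : Type) [Field F] [Fintype F] (n : ℕ) (hn : 1 ≤ n)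
    (h : ¬(n = 1 ∧ Fintype.card F = 2)) (M : Matrix (Fin n) (Fin n) F) :
    ∃ A B : Matrix (Fin n) (Fin n) F, A.det ≠ 0 ∧ B.det ≠ 0 ∧ M = A + B :=
  stmt_8_general F n h M
end

section
/- Let R be a finite ring with identity whose cardinality is odd. Then every element of R can be written as a sum of two units of R. -/
/-!
The subring generated by `r` is commutative, and its order divides `|R|`, so it is odd. In a
finite commutative ring of odd order every residue field has odd order, hence at least three
elements, so by the Chinese remainder theorem there is a `u` whose residue modulo every maximal
ideal avoids both `0` and the residue of `r`. Then neither `u` nor `r - u` lies in a maximal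
ideal, so both are units.
-/

theorem isUnit_of_forall_notMem_of_isMaximal {S : Type*} [CommRing S] {y : S}
    (hy : ∀ m : Ideal S, m.IsMaximal → y ∉ m) : IsUnit y := by
  by_contra hny
  obtain ⟨m, hm, hym⟩ := exists_max_ideal_of_mem_nonunits (mem_nonunits_iff.mpr hny)
  exact hy m hm hym

theorem exists_isUnit_add_isUnit_of_three_le_card_quotient {S : Type*} [CommRing S]
    [Finite (MaximalSpectrum S)] (hcard : ∀ m : Ideal S, m.IsMaximal → 3 ≤ ENat.card (S ⧸ m))
    (x : S) : ∃ u v : S, IsUnit u ∧ IsUnit v ∧ x = u + v := by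
  have hresidue (m : MaximalSpectrum S) :
      ∃ a : S ⧸ m.asIdeal, a ≠ 0 ∧ a ≠ Ideal.Quotient.mk _ x :=
    ENat.exists_ne_ne_of_three_le (hcard _ m.isMaximal) _ _
  choose a ha0 hax using hresidue
  have hcoprime : Pairwise (Function.onFun IsCoprime fun m : MaximalSpectrum S => m.asIdeal) :=
    fun m m' hne => Ideal.isCoprime_iff_sup_eq.mpr <|
      m.isMaximal.coprime_of_ne m'.isMaximal (mt MaximalSpectrum.ext hne)
  obtain ⟨u, hu⟩ := Ideal.pi_quotient_surjective hcoprime a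
  refine ⟨u, x - u, isUnit_of_forall_notMem_of_isMaximal fun m hm hum => ?_,
    isUnit_of_forall_notMem_of_isMaximal fun m hm hxum => ?_, by ring⟩
  · exact ha0 ⟨m, hm⟩ <| (hu ⟨m, hm⟩).symm.trans (Ideal.Quotient.eq_zero_iff_mem.mpr hum)
  · refine hax ⟨m, hm⟩ <| (hu ⟨m, hm⟩).symm.trans ?_
    rwa [Ideal.Quotient.eq, ← neg_mem_iff, neg_sub]

theorem three_le_card_quotient_of_odd_card {S : Type*} [CommRing S] [Finite S]
    (hodd : Odd (Nat.card S)) {I : Ideal S} (hI : I ≠ ⊤) : 3 ≤ ENat.card (S ⧸ I) := by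
  have : Nontrivial (S ⧸ I) := Ideal.Quotient.nontrivial_iff.mpr hI
  have : Finite (S ⧸ I) := Finite.of_surjective _ Ideal.Quotient.mk_surjective
  obtain ⟨k, hk⟩ : Odd (Nat.card (S ⧸ I)) :=
    hodd.of_dvd_nat I.toAddSubgroup.card_quotient_dvd_card
  have htwo : 2 ≤ Nat.card (S ⧸ I) := Finite.one_lt_card
  rw [ENat.card_eq_coe_natCard]
  exact_mod_cast (by omega : 3 ≤ Nat.card (S ⧸ I))

open scoped IsMulCommutative in
theorem exists_isUnit_add_isUnit_of_odd_card {R : Type*} [Ring R] [Finite R]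
    (hodd : Odd (Nat.card R)) (r : R) : ∃ u v : R, IsUnit u ∧ IsUnit v ∧ r = u + v := by
  let S := Subring.closure ({r} : Set R)
  have : IsMulCommutative S := Subring.isMulCommutative_closure (by simp)
  have hoddS : Odd (Nat.card S) := hodd.of_dvd_nat S.toAddSubgroup.card_addSubgroup_dvd_card
  obtain ⟨u, v, hu, hv, huv⟩ := exists_isUnit_add_isUnit_of_three_le_card_quotient
    (fun m hm => three_le_card_quotient_of_odd_card hoddS hm.ne_top)
    ⟨r, Subring.subset_closure rfl⟩
  exact ⟨u, v, hu.map S.subtype, hv.map S.subtype, congrArg Subtype.val huv⟩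

theorem stmt_9 (R : Type) [Ring R] [Fintype R] (hodd : Odd (Fintype.card R))
    (r : R) : ∃ u v : Rˣ, r = (u : R) + (v : R) := by
  obtain ⟨u, v, hu, hv, huv⟩ :=
    exists_isUnit_add_isUnit_of_odd_card (Nat.card_eq_fintype_card (α := R) ▸ hodd) r
  exact ⟨hu.unit, hv.unit, huv⟩
end

section
/- Let q be a prime power and n ≥ 1. The adjacency matrix (over ℂ) of the unit-graph on Mat_n(F_q) has at most n + 1 distinct eigenvalues; that is, the set of roots in ℂ of its characteristic polynomial has cardinality at most n + 1. -/
/-!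
The unit-graph is the Cayley graph of the additive group `Mat_n(F_q)` with respect to the
nonzero invertible matrices, so its eigenvectors are the additive characters and the eigenvalue
of a character `χ` is `∑ χ U` over that connection set. Fixing a nontrivial character `ψ` of
`F_q`, every character of `Mat_n(F_q)` is `A ↦ ψ (tr (M * A))` for a unique `M`, and the resulting
eigenvalue is unchanged when `M` is replaced by `P * M * Q` with `P`, `Q` invertible. Hence it
only depends on the rank of `M`, which takes `n + 1` values.
-/

open scoped Classical

/-- The unit-graph on `Mat_n(F)`: distinct matrices `A` and `B` are adjacent
if and only if `B - A` is invertible. -/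
def unitGraph (n : ℕ) (F : Type) [Field F] [Fintype F] :
    SimpleGraph (Matrix (Fin n) (Fin n) F) where
  Adj A B := A ≠ B ∧ IsUnit (B - A)
  symm := by
    constructor
    intro A B h
    exact ⟨h.1.symm, by rw [← neg_sub]; exact h.2.neg⟩
  loopless := by
    constructor
    intro A h
    exact h.1 rfl

open Matrix Module End

theorem Module.End.hasEigenvalue_iff_of_apply_basis {K V ι : Type*} [Field K] [AddCommGroup V]
    [Module K V] [Fintype ι] [DecidableEq ι] {f : End K V} (b : Basis ι K V) (d : ι → K)
    (hf : ∀ i, f (b i) = d i • b i) (μ : K) : f.HasEigenvalue μ ↔ ∃ i, d i = μ := by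
  obtain rfl : f = toLin b b (diagonal d) := b.ext fun i => by
    rw [hf, toLin_self]
    simp [diagonal_apply, ite_smul, Finset.sum_ite_eq']
  exact hasEigenvalue_toLin_diagonal_iff d b

theorem Matrix.isRoot_charpoly_iff_of_apply_eq_sub {G : Type*} [AddCommGroup G] [Fintype G]
    [DecidableEq G] {A : Matrix G G ℂ} (f : G → ℂ) (hA : ∀ x y, A x y = f (y - x)) (μ : ℂ) :
    A.charpoly.IsRoot μ ↔ ∃ χ : AddChar G ℂ, ∑ g, f g * χ g = μ := by
  rw [← charpoly_toLin', ← hasEigenvalue_iff_isRoot_charpoly]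
  refine hasEigenvalue_iff_of_apply_basis (AddChar.complexBasis G) _ (fun χ => ?_) μ
  ext x
  simp only [AddChar.complexBasis_apply, toLin'_apply, mulVec, dotProduct, hA, Pi.smul_apply,
    smul_eq_mul, Finset.sum_mul]
  refine Fintype.sum_equiv (Equiv.subRight x) _ _ fun y => ?_
  rw [Equiv.subRight_apply, mul_assoc, ← AddChar.map_add_eq_mul, sub_add_cancel]

theorem SimpleGraph.isRoot_charpoly_adjMatrix_iff_of_adj_iff_sub_mem {G : Type*} [AddCommGroup G]
    [Fintype G] [DecidableEq G] (Γ : SimpleGraph G) [DecidableRel Γ.Adj] (S : Finset G)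
    (hS : ∀ x y, Γ.Adj x y ↔ y - x ∈ S) (μ : ℂ) :
    (Γ.adjMatrix ℂ).charpoly.IsRoot μ ↔ ∃ χ : AddChar G ℂ, ∑ s ∈ S, χ s = μ := by
  rw [isRoot_charpoly_iff_of_apply_eq_sub (fun g => if g ∈ S then 1 else 0)
    (fun x y => by rw [adjMatrix_apply, if_congr (hS x y) rfl rfl])]
  simp only [boole_mul, Finset.sum_ite_mem, Finset.univ_inter]

section Rank

variable {m K : Type*} [Fintype m] [DecidableEq m] [Field K]

theorem Matrix.isUnit_permMatrix (σ : Equiv.Perm m) : IsUnit (σ.permMatrix K) := by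
  simpa using (Group.isUnit σ⁻¹).map (permMatrixHom (R := K))

theorem Matrix.submatrix_equiv_eq_permMatrix_mul_mul (σ : Equiv.Perm m) (X : Matrix m m K) :
    X.submatrix σ σ = σ.permMatrix K * X * σ⁻¹.permMatrix K := by
  rw [PEquiv.toMatrix_toPEquiv_mul, PEquiv.mul_toMatrix_toPEquiv, submatrix_submatrix,
    Equiv.Perm.inv_def, Equiv.symm_symm]
  rfl

theorem Matrix.apply_eq_of_rank_eq {β : Type*} {φ : Matrix m m K → β}
    (hφ : ∀ P M Q, IsUnit P → IsUnit Q → φ (P * M * Q) = φ M) {M N : Matrix m m K}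
    (h : M.rank = N.rank) : φ M = φ N := by
  obtain ⟨V, U, e, hV, hU, hM⟩ := exists_rank_normal_form M
  obtain ⟨V', U', e', hV', hU', hN⟩ := exists_rank_normal_form N
  generalize M.rank = r at *
  subst h
  -- the two normal forms differ by a simultaneous permutation of rows and columns
  set σ := e.trans e'.symm
  have hσ : (fromBlocks 1 0 0 0).submatrix e e
      = ((fromBlocks 1 0 0 0).submatrix e' e' : Matrix m m K).submatrix σ σ := by
    simp [σ, submatrix_submatrix, Function.comp_def]
  rw [← hφ V M U hV hU, ← hφ V' N U' hV' hU', hM, hN, hσ,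
    submatrix_equiv_eq_permMatrix_mul_mul, hφ _ _ _ (isUnit_permMatrix σ) (isUnit_permMatrix σ⁻¹)]

theorem Matrix.card_image_le_of_mul_mul_invariant {β : Type*} [DecidableEq β] [Fintype K]
    {φ : Matrix m m K → β} (hφ : ∀ P M Q, IsUnit P → IsUnit Q → φ (P * M * Q) = φ M) :
    (Finset.univ.image φ).card ≤ Fintype.card m + 1 := by
  refine (Finset.card_le_card_of_surjOn
    (fun r => φ (Classical.epsilon fun M : Matrix m m K => M.rank = r)) ?_).trans_eq
    (Finset.card_range _)
  intro b hb
  obtain ⟨M, -, rfl⟩ := Finset.mem_image.1 hb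
  exact ⟨M.rank, Finset.mem_range_succ_iff.2 (rank_le_card_width M),
    apply_eq_of_rank_eq hφ
      (Classical.epsilon_spec (p := fun N : Matrix m m K => N.rank = M.rank) ⟨M, rfl⟩)⟩

end Rank

section TraceChar

variable {ι F : Type*} [Fintype ι] [Field F]

noncomputable def Matrix.traceChar (ψ : AddChar F ℂ) (M : Matrix ι ι F) :
    AddChar (Matrix ι ι F) ℂ :=
  ψ.compAddMonoidHom ((traceAddMonoidHom ι F).comp (AddMonoidHom.mulLeft M))

theorem Matrix.traceChar_apply (ψ : AddChar F ℂ) (M A : Matrix ι ι F) :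
    traceChar ψ M A = ψ (trace (M * A)) := rfl

theorem Matrix.traceChar_injective {ψ : AddChar F ℂ} (hψ : ψ ≠ 0) :
    Function.Injective (traceChar (ι := ι) ψ) := by
  obtain ⟨a, ha⟩ := AddChar.ne_zero_iff.1 hψ
  intro M N hMN
  rw [← sub_eq_zero, ext_iff_trace_mul_right]
  intro A
  by_contra ht
  rw [Matrix.zero_mul, trace_zero] at ht
  -- rescale `A` so that the two traces differ by exactly `a`
  set B := (a / trace ((M - N) * A)) • A
  have hB : trace (M * B) = trace (N * B) + a := by
    rw [← sub_eq_iff_eq_add', ← trace_sub, ← Matrix.sub_mul, Matrix.mul_smul, trace_smul,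
      smul_eq_mul, div_mul_cancel₀ _ ht]
  have hne : ψ (trace (N * B)) ≠ 0 := left_ne_zero_of_mul_eq_one (b := ψ (-trace (N * B))) <| by
    rw [← AddChar.map_add_eq_mul, add_neg_cancel, AddChar.map_zero_eq_one]
  have hMNB := DFunLike.congr_fun hMN B
  rw [traceChar_apply, traceChar_apply, hB, AddChar.map_add_eq_mul, mul_eq_left₀ hne] at hMNB
  exact ha hMNB

variable [DecidableEq ι] [Fintype F]

theorem Matrix.traceChar_bijective {ψ : AddChar F ℂ} (hψ : ψ ≠ 0) :
    Function.Bijective (traceChar (ι := ι) ψ) :=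
  (Fintype.bijective_iff_injective_and_card _).2 ⟨traceChar_injective hψ, AddChar.card_eq.symm⟩

variable [DecidableEq F]

noncomputable def unitGraphEigenvalue (ψ : AddChar F ℂ) (M : Matrix ι ι F) : ℂ :=
  ∑ U with U ≠ 0 ∧ IsUnit U, ψ (trace (M * U))

theorem unitGraphEigenvalue_mul_mul (ψ : AddChar F ℂ) (P M Q : Matrix ι ι F) (hP : IsUnit P)
    (hQ : IsUnit Q) : unitGraphEigenvalue ψ (P * M * Q) = unitGraphEigenvalue ψ M := by
  obtain ⟨p, rfl⟩ := hP
  obtain ⟨q, rfl⟩ := hQ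
  unfold unitGraphEigenvalue
  refine Finset.sum_equiv ((Units.mulLeft q).trans (Units.mulRight p)) (fun U => ?_) fun U _ => ?_
  · simp [Units.mul_right_eq_zero, Units.mul_left_eq_zero, mul_assoc]
  · simp only [Equiv.trans_apply, Units.mulLeft_apply, Units.mulRight_apply]
    rw [Matrix.mul_assoc, Matrix.mul_assoc, trace_mul_comm, Matrix.mul_assoc, Matrix.mul_assoc]

end TraceChar

theorem unitGraph_roots_charpoly_subset {n : ℕ} {F : Type} [Field F] [Fintype F] [DecidableEq F]
    {ψ : AddChar F ℂ} (hψ : ψ ≠ 0) :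
    ((unitGraph n F).adjMatrix ℂ).charpoly.roots.toFinset
      ⊆ Finset.univ.image (unitGraphEigenvalue (ι := Fin n) ψ) := by
  intro μ hμ
  obtain ⟨χ, rfl⟩ := ((unitGraph n F).isRoot_charpoly_adjMatrix_iff_of_adj_iff_sub_mem
    {U | U ≠ 0 ∧ IsUnit U} (fun A B => by simp [unitGraph, sub_eq_zero, eq_comm]) μ).1
    (Polynomial.isRoot_of_mem_roots (Multiset.mem_toFinset.1 hμ))
  obtain ⟨M, rfl⟩ := (traceChar_bijective hψ).2 χ
  exact Finset.mem_image_of_mem _ (Finset.mem_univ M)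

theorem stmt_11_general (F : Type) [Field F] [Fintype F] [DecidableEq F] (n : ℕ) :
    ((unitGraph n F).adjMatrix ℂ).charpoly.roots.toFinset.card ≤ n + 1 := by
  obtain ⟨ψ, hψ₁⟩ : ∃ ψ : AddChar F ℂ, ψ 1 ≠ 1 := AddChar.exists_apply_ne_zero.2 one_ne_zero
  have hψ : ψ ≠ 0 := AddChar.ne_zero_iff.2 ⟨1, hψ₁⟩
  calc _ ≤ (Finset.univ.image (unitGraphEigenvalue ψ)).card :=
        Finset.card_le_card (unitGraph_roots_charpoly_subset hψ)
    _ ≤ Fintype.card (Fin n) + 1 :=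
        card_image_le_of_mul_mul_invariant (unitGraphEigenvalue_mul_mul ψ)
    _ = n + 1 := by rw [Fintype.card_fin]

theorem stmt_11 (F : Type) [Field F] [Fintype F] [DecidableEq F] (n : ℕ) (hn : 1 ≤ n) :
    ((unitGraph n F).adjMatrix ℂ).charpoly.roots.toFinset.card ≤ n + 1 :=
  stmt_11_general F n
end

section
/- Let q be a prime power. The unit-graph on Mat_2(F_q) is a strongly regular graph with parameters (q⁴, q⁴ − q³ − q² + q, q⁴ − 2q³ − q² + 3q, q⁴ − 2q³ + q); that is, it has q⁴ vertices, every vertex has degree q⁴ − q³ − q² + q, every pair of distinct adjacent vertices has exactly q⁴ − 2q³ − q² + 3q common neighbors, and every pair of distinct nonadjacent vertices has exactly q⁴ − 2q³ + q common neighbors. -/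
/-
The unit graph is the Cayley graph of `(Mat₂(F_q), +)` with connection set `GL₂(F_q)`, so
its degree is `|GL₂(F_q)| = (q² - 1)(q² - q)`, and the common neighbours of `v` and `w`
correspond to the matrices `X` with `X` and `X - D` both invertible, where `D = w - v`. By
inclusion–exclusion their number is `q⁴ - 2(q⁴ - |GL₂(F_q)|) + N(D)`, where `N(D)` counts the
`X` with `X` and `X - D` both singular. Since `N(PDQ) = N(D)` for invertible `P` and `Q`, it
suffices to compute `N(1) = q² + q` (singular matrices of trace `1`) and
`N(diag(1, 0)) = 2q² - q` (matrices with `d = 0` and `bc = 0`).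
-/

open scoped Classical

open Finset

section FiniteRing

variable {R : Type*} [Ring R] [Fintype R] [DecidablePred (IsUnit : R → Prop)]

lemma card_filter_isUnit_eq_card_units : #{x : R | IsUnit x} = Nat.card Rˣ := by
  rw [← Fintype.card_subtype, ← Nat.card_eq_fintype_card]
  exact Nat.card_congr Submonoid.unitsTypeEquivIsUnitSubmonoid.toEquiv.symm

lemma card_filter_isUnit_and_isUnit_sub_add (d : R) :
    #{x | IsUnit x ∧ IsUnit (x - d)} + 2 * #{x : R | ¬IsUnit x} =
      Fintype.card R + #{x | ¬IsUnit x ∧ ¬IsUnit (x - d)} := by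
  set s : Finset R := {x | ¬IsUnit x}
  set t : Finset R := {x | ¬IsUnit (x - d)}
  have hts : #t = #s := card_equiv (Equiv.subRight d) (by simp [s, t])
  have hunion : ({x | IsUnit x ∧ IsUnit (x - d)} : Finset R) = (s ∪ t)ᶜ := by ext; simp [s, t]
  have hinter : ({x | ¬IsUnit x ∧ ¬IsUnit (x - d)} : Finset R) = s ∩ t := by ext; simp [s, t]
  rw [hunion, hinter, card_compl]
  have := card_union_add_card_inter s t
  have := card_le_univ (s ∪ t)
  omega

lemma card_filter_nonunit_pair_mul_mul {p q : R} (hp : IsUnit p) (hq : IsUnit q) (d : R) :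
    #{x | ¬IsUnit x ∧ ¬IsUnit (x - p * d * q)} = #{x | ¬IsUnit x ∧ ¬IsUnit (x - d)} := by
  obtain ⟨u, rfl⟩ := hp
  obtain ⟨v, rfl⟩ := hq
  symm
  refine card_equiv ((Units.mulLeft u).trans (Units.mulRight v)) fun x => ?_
  have : ↑u * x * ↑v - ↑u * d * ↑v = ↑u * (x - d) * ↑v := by noncomm_ring
  simp [this]

end FiniteRing

section UnitGraph

variable {n : ℕ} [NeZero n] {F : Type} [Field F] [Fintype F]

lemma unitGraph_adj_iff {A B : Matrix (Fin n) (Fin n) F} :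
    (unitGraph n F).Adj A B ↔ IsUnit (B - A) :=
  ⟨And.right, fun h => ⟨by rintro rfl; simp at h, h⟩⟩

lemma card_neighborSet_unitGraph (v : Matrix (Fin n) (Fin n) F)
    [Fintype ((unitGraph n F).neighborSet v)] :
    Fintype.card ((unitGraph n F).neighborSet v) =
      #{x : Matrix (Fin n) (Fin n) F | IsUnit x} := by
  rw [← Fintype.card_subtype]
  exact Fintype.card_congr <| (Equiv.subRight v).subtypeEquiv fun x => by
    simp [unitGraph_adj_iff]

lemma card_commonNeighbors_unitGraph (v w : Matrix (Fin n) (Fin n) F)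
    [Fintype ((unitGraph n F).commonNeighbors v w)] :
    Fintype.card ((unitGraph n F).commonNeighbors v w) =
      #{x | IsUnit x ∧ IsUnit (x - (w - v))} := by
  rw [← Fintype.card_subtype]
  exact Fintype.card_congr <| (Equiv.subRight v).subtypeEquiv fun x => by
    simp [SimpleGraph.mem_commonNeighbors, unitGraph_adj_iff]

end UnitGraph

section Matrix

lemma Matrix.swap_mul_mul_swap_apply {n R : Type*} [Fintype n] [DecidableEq n] [Semiring R]
    (a i j : n) (D : Matrix n n R) :
    (Matrix.swap R a i * D * Matrix.swap R a j) a a = D i j := by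
  rw [Matrix.mul_swap_apply_left, Matrix.swap_mul_apply_left]

lemma Matrix.isUnit_swap {n R : Type*} [Fintype n] [DecidableEq n] [Semiring R] (i j : n) :
    IsUnit (Matrix.swap R i j) :=
  ⟨⟨_, _, Matrix.swap_mul_self i j, Matrix.swap_mul_self i j⟩, rfl⟩

lemma card_filter_matrix_fin_two {α : Type*} [Fintype α] (p : Matrix (Fin 2) (Fin 2) α → Prop)
    [DecidablePred p] :
    #{x | p x} = ∑ a, ∑ b, ∑ c, ∑ d, if p !![a, b; c, d] then 1 else 0 := by
  let e : Matrix (Fin 2) (Fin 2) α ≃ (α × α) × (α × α) :=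
    Matrix.of.symm.trans <| (finTwoArrowEquiv _).trans <|
      (finTwoArrowEquiv α).prodCongr (finTwoArrowEquiv α)
  rw [card_filter, ← e.symm.sum_comp]
  simp only [Fintype.sum_prod_type]
  rfl

variable {F : Type} [Field F]

lemma not_isUnit_of_fin_two_iff (a b c d : F) : ¬IsUnit !![a, b; c, d] ↔ a * d = b * c := by
  rw [Matrix.isUnit_iff_isUnit_det, isUnit_iff_ne_zero, not_not, Matrix.det_fin_two_of,
    sub_eq_zero]

lemma eq_mul_single_mul_of_zero_zero_ne_zero {D : Matrix (Fin 2) (Fin 2) F} (h : D 0 0 ≠ 0)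
    (hD : ¬IsUnit D) :
    D = !![D 0 0, 0; D 1 0, 1] * !![1, 0; 0, 0] * !![1, D 0 1 / D 0 0; 0, 1] := by
  rw [Matrix.eta_fin_two D, not_isUnit_of_fin_two_iff] at hD
  rw [Matrix.mul_fin_two, Matrix.mul_fin_two]
  ext i j
  fin_cases i <;> fin_cases j <;> simp
  · field_simp
  · field_simp
    linear_combination hD

end Matrix

section FiniteField

variable {F : Type} [Field F] [Fintype F]

lemma card_filter_isUnit_matrix (n : ℕ) :
    #{x : Matrix (Fin n) (Fin n) F | IsUnit x} =
      ∏ i : Fin n, (Fintype.card F ^ n - Fintype.card F ^ (i : ℕ)) := by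
  rw [card_filter_isUnit_eq_card_units, Matrix.card_GL_field]

lemma card_filter_isUnit_matrix_fin_two_add :
    #{x : Matrix (Fin 2) (Fin 2) F | IsUnit x} + Fintype.card F ^ 3 + Fintype.card F ^ 2 =
      Fintype.card F ^ 4 + Fintype.card F := by
  have h1 : 1 ≤ Fintype.card F ^ 2 := Nat.one_le_pow _ _ Fintype.card_pos
  have h2 : Fintype.card F ≤ Fintype.card F ^ 2 := Nat.le_self_pow two_ne_zero _
  rw [card_filter_isUnit_matrix, Fin.prod_univ_two, Fin.val_zero, Fin.val_one, pow_zero, pow_one]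
  zify [h1, h2]
  ring

lemma sum_ite_mul_eq (b t : F) :
    ∑ c : F, (if b * c = t then 1 else 0 : ℕ) =
      if b = 0 then (if t = 0 then Fintype.card F else 0) else 1 := by
  rcases eq_or_ne b 0 with rfl | hb
  · simp [eq_comm]
  · simp [hb, ← eq_inv_mul_iff_mul_eq₀ hb]

lemma sum_sum_ite_mul_eq (t : F) :
    ∑ b : F, ∑ c : F, (if b * c = t then 1 else 0 : ℕ) =
      Fintype.card F - 1 + if t = 0 then Fintype.card F else 0 := by
  simp only [sum_ite_mul_eq]
  rw [Fintype.sum_eq_add_sum_compl 0, if_pos rfl, add_comm,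
    sum_ite_of_false fun b hb => by simpa using hb]
  simp [card_compl]

lemma card_filter_nonunit_pair_one :
    #{x : Matrix (Fin 2) (Fin 2) F | ¬IsUnit x ∧ ¬IsUnit (x - 1)} =
      Fintype.card F ^ 2 + Fintype.card F := by
  have hpair (a b c d : F) : (¬IsUnit !![a, b; c, d] ∧ ¬IsUnit (!![a, b; c, d] - 1)) ↔
      d = 1 - a ∧ b * c = a * (1 - a) := by
    have : !![a, b; c, d] - 1 = !![a - 1, b; c, d - 1] := by
      rw [Matrix.one_fin_two]; ext i j; fin_cases i <;> fin_cases j <;> simp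
    rw [this, not_isUnit_of_fin_two_iff, not_isUnit_of_fin_two_iff]
    constructor
    · rintro ⟨h, h'⟩
      have hd : d = 1 - a := by linear_combination h - h'
      exact ⟨hd, by subst hd; linear_combination -h⟩
    · rintro ⟨rfl, h⟩
      constructor <;> linear_combination -h
  have hroots : #{a : F | a * (1 - a) = 0} = 2 := by
    rw [show ({a : F | a * (1 - a) = 0} : Finset F) = {0, 1} by
      ext; simp [sub_eq_zero, eq_comm (a := (1 : F))]]
    exact card_pair zero_ne_one
  have hq : 1 ≤ Fintype.card F := Fintype.card_pos
  rw [card_filter_matrix_fin_two]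
  simp only [hpair, ite_and, sum_ite_eq', mem_univ, if_true, sum_sum_ite_mul_eq]
  rw [sum_add_distrib, ← sum_filter, sum_const, sum_const, card_univ, hroots, smul_eq_mul,
    smul_eq_mul]
  zify [hq]
  ring

lemma card_filter_nonunit_pair_single_add :
    #{x : Matrix (Fin 2) (Fin 2) F | ¬IsUnit x ∧ ¬IsUnit (x - !![1, 0; 0, 0])} +
      Fintype.card F = 2 * Fintype.card F ^ 2 := by
  have hpair (a b c d : F) :
      (¬IsUnit !![a, b; c, d] ∧ ¬IsUnit (!![a, b; c, d] - !![1, 0; 0, 0])) ↔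
        d = 0 ∧ b * c = 0 := by
    have : !![a, b; c, d] - !![1, 0; 0, 0] = !![a - 1, b; c, d] := by
      ext i j; fin_cases i <;> fin_cases j <;> simp
    rw [this, not_isUnit_of_fin_two_iff, not_isUnit_of_fin_two_iff]
    constructor
    · rintro ⟨h, h'⟩
      have hd : d = 0 := by linear_combination h - h'
      exact ⟨hd, by subst hd; linear_combination -h⟩
    · rintro ⟨rfl, h⟩
      constructor <;> linear_combination -h
  have hq : 1 ≤ Fintype.card F := Fintype.card_pos
  rw [card_filter_matrix_fin_two]
  simp only [hpair, ite_and, sum_ite_eq', mem_univ, if_true, sum_sum_ite_mul_eq, sum_const,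
    card_univ, smul_eq_mul]
  zify [hq]
  ring

lemma card_filter_nonunit_pair_eq_single {D : Matrix (Fin 2) (Fin 2) F} (h : D ≠ 0)
    (hD : ¬IsUnit D) :
    #{x | ¬IsUnit x ∧ ¬IsUnit (x - D)} =
      #{x : Matrix (Fin 2) (Fin 2) F | ¬IsUnit x ∧ ¬IsUnit (x - !![1, 0; 0, 0])} := by
  obtain ⟨i, j, hij⟩ : ∃ i j, D i j ≠ 0 := by
    by_contra! h0
    exact h (Matrix.ext h0)
  have hi := Matrix.isUnit_swap (R := F) 0 i
  have hj := Matrix.isUnit_swap (R := F) 0 j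
  have h00 : (Matrix.swap F 0 i * D * Matrix.swap F 0 j) 0 0 ≠ 0 := by
    rwa [Matrix.swap_mul_mul_swap_apply]
  have hsingular : ¬IsUnit (Matrix.swap F 0 i * D * Matrix.swap F 0 j) := by
    rwa [hj.mul_right_iff, hi.mul_left_iff]
  rw [← card_filter_nonunit_pair_mul_mul hi hj,
    eq_mul_single_mul_of_zero_zero_ne_zero h00 hsingular, card_filter_nonunit_pair_mul_mul]
  all_goals rw [Matrix.isUnit_iff_isUnit_det, Matrix.det_fin_two_of, isUnit_iff_ne_zero]
  · simpa using h00
  · simp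

end FiniteField

theorem stmt_12_general (F : Type) [Field F] [Fintype F] :
    (unitGraph 2 F).IsSRGWith
      (Fintype.card F ^ 4)
      (Fintype.card F ^ 4 - Fintype.card F ^ 3 - Fintype.card F ^ 2 + Fintype.card F)
      (Fintype.card F ^ 4 + 3 * Fintype.card F - 2 * Fintype.card F ^ 3 - Fintype.card F ^ 2)
      (Fintype.card F ^ 4 - 2 * Fintype.card F ^ 3 + Fintype.card F) := by
  have hcard : Fintype.card (Matrix (Fin 2) (Fin 2) F) = Fintype.card F ^ 4 := by
    rw [Fintype.card_congr Matrix.of.symm, Fintype.card_fun, Fintype.card_fun]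
    simp [← pow_mul]
  have hq : 2 ≤ Fintype.card F := Fintype.one_lt_card
  have h3 : Fintype.card F ^ 2 ≤ Fintype.card F ^ 3 :=
    Nat.pow_le_pow_right (by omega) (by norm_num)
  have h4 : 2 * Fintype.card F ^ 3 ≤ Fintype.card F ^ 4 := by
    rw [pow_succ' _ 3]; exact Nat.mul_le_mul_right _ hq
  have hunits := card_filter_isUnit_matrix_fin_two_add (F := F)
  have hsplit :=
    card_filter_add_card_filter_not (s := univ) fun x : Matrix (Fin 2) (Fin 2) F => IsUnit x
  rw [card_univ, hcard] at hsplit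
  refine ⟨hcard, fun v => ?_, fun v w hvw => ?_, fun v w hne hvw => ?_⟩
  · rw [← SimpleGraph.card_neighborSet_eq_degree, card_neighborSet_unitGraph]
    omega
  · have hD : IsUnit (w - v) := unitGraph_adj_iff.mp hvw
    have hN := card_filter_nonunit_pair_mul_mul hD isUnit_one 1
    rw [mul_one, mul_one, card_filter_nonunit_pair_one] at hN
    have := card_filter_isUnit_and_isUnit_sub_add (w - v)
    rw [card_commonNeighbors_unitGraph]
    omega
  · have hD : ¬IsUnit (w - v) := fun h => hvw (unitGraph_adj_iff.mpr h)
    have hN := card_filter_nonunit_pair_eq_single (sub_ne_zero.mpr hne.symm) hD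
    have := card_filter_nonunit_pair_single_add (F := F)
    have := card_filter_isUnit_and_isUnit_sub_add (w - v)
    rw [card_commonNeighbors_unitGraph]
    omega

theorem stmt_12 (F : Type) [Field F] [Fintype F] [DecidableEq F] :
    (unitGraph 2 F).IsSRGWith
      (Fintype.card F ^ 4)
      (Fintype.card F ^ 4 - Fintype.card F ^ 3 - Fintype.card F ^ 2 + Fintype.card F)
      (Fintype.card F ^ 4 + 3 * Fintype.card F - 2 * Fintype.card F ^ 3 - Fintype.card F ^ 2)
      (Fintype.card F ^ 4 - 2 * Fintype.card F ^ 3 + Fintype.card F) :=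
  stmt_12_general F
end

section
/- Let q be a prime power and let χ be a nontrivial additive character of F_q with values in ℂ. Then Σ_{s ∈ GL_2(F_q)} χ(s₁₁) = q − q² and Σ_{s ∈ GL_2(F_q)} χ(s₁₁ + s₂₂) = q, where s₁₁ and s₂₂ denote the (1,1)- and (2,2)-entries of s. -/
/-!
An invertible matrix with diagonal `(a, d)` is the same as a pair `(b, c)` with `bc ≠ ad`.
There are `q² - q + 1` such pairs when `ad ≠ 0` and `(q - 1)²` when `ad = 0`, so for any
function `G` of the diagonal, the sum of `G` over `GL₂(F_q)` is
`(q² - q + 1) ∑ G - q ∑_{ad = 0} G`. For `G = χ(a)` and `G = χ(a + d)` the full sum vanishes by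
orthogonality, while the sum over the cross `ad = 0` is `q - 1`, resp. `-1`.
-/

open Finset

theorem sum_units_eq_sum_filter_isUnit {M R : Type*} [Monoid M] [Fintype M] [Fintype Mˣ]
    [DecidablePred (IsUnit : M → Prop)] [AddCommMonoid R] (f : M → R) :
    ∑ u : Mˣ, f u = ∑ m ∈ univ.filter IsUnit, f m := by
  refine sum_nbij (↑) (by simp) (fun _ _ _ _ => Units.ext) (fun m hm => ?_) (fun _ _ => rfl)
  simp only [coe_filter, mem_univ, true_and, Set.mem_ofPred_eq] at hm
  exact ⟨hm.unit, by simp, hm.unit_spec⟩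

def matrixFinTwoEquiv {α : Type*} : (α × α) × (α × α) ≃ Matrix (Fin 2) (Fin 2) α where
  toFun x := !![x.1.1, x.2.1; x.2.2, x.1.2]
  invFun m := ((m 0 0, m 1 1), (m 0 1, m 1 0))
  left_inv x := by simp
  right_inv m := by ext i j; fin_cases i <;> fin_cases j <;> rfl

section Fintype

variable {F : Type*} [Fintype F] [DecidableEq F]

theorem card_filter_mul_eq_of_ne_zero [GroupWithZero F] {t : F} (ht : t ≠ 0) :
    #{y : F × F | y.1 * y.2 = t} = Fintype.card F - 1 := by
  rw [← card_univ, ← card_erase_of_mem (mem_univ 0)]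
  refine card_nbij' Prod.fst (fun b => (b, b⁻¹ * t)) (fun y hy => ?_) (fun b hb => ?_)
    (fun y hy => ?_) (fun b _ => rfl)
  all_goals simp only [coe_filter, coe_erase, coe_univ, mem_univ, true_and, Set.mem_ofPred_eq,
    Set.mem_sdiff, Set.mem_univ, Set.mem_singleton_iff] at *
  · exact left_ne_zero_of_mul (hy ▸ ht)
  · exact mul_inv_cancel_left₀ hb t
  · rw [← hy, inv_mul_cancel_left₀ (left_ne_zero_of_mul (hy ▸ ht))]

theorem sum_filter_mul_eq_zero [MulZeroClass F] [NoZeroDivisors F] {M : Type*} [AddCommGroup M]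
    (g : F × F → M) :
    ∑ y ∈ univ.filter (fun y : F × F => y.1 * y.2 = 0), g y =
      ∑ d, g (0, d) + ∑ a, g (a, 0) - g (0, 0) := by
  have hunion : univ.filter (fun y : F × F => y.1 * y.2 = 0) =
      {0} ×ˢ univ ∪ univ ×ˢ {0} := by
    ext
    simp only [mem_filter, mem_union, mem_product, mem_singleton, mem_univ, true_and, and_true,
      mul_eq_zero]
  have hinter : ({0} ×ˢ univ ∩ univ ×ˢ {0} : Finset (F × F)) = {(0, 0)} := by
    ext ⟨a, d⟩
    simp only [mem_inter, mem_product, mem_singleton, mem_univ, true_and, and_true, Prod.mk.injEq]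
  rw [hunion, eq_sub_iff_add_eq, ← sum_singleton g (0, 0), ← hinter, sum_union_inter,
    sum_product, sum_product_right, sum_singleton, sum_singleton]

theorem natCast_card_filter_mul_ne [GroupWithZero F] {R : Type*} [Ring R] (t : F) :
    (#{y : F × F | y.1 * y.2 ≠ t} : R) =
      (Fintype.card F : R) ^ 2 - Fintype.card F + 1 -
        if t = 0 then (Fintype.card F : R) else 0 := by
  have hsplit : (#{y : F × F | y.1 * y.2 = t} : R) + #{y : F × F | y.1 * y.2 ≠ t} =
      (Fintype.card F : R) ^ 2 := by
    rw [← Nat.cast_add, card_filter_add_card_filter_not, card_univ, Fintype.card_prod, sq,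
      Nat.cast_mul]
  rw [← eq_sub_iff_add_eq'] at hsplit
  rw [hsplit]
  split_ifs with ht
  · subst ht
    have := sum_filter_mul_eq_zero (fun _ : F × F => (1 : R))
    simp only [sum_const, card_univ, nsmul_eq_mul, mul_one] at this
    rw [this]
    abel
  · rw [card_filter_mul_eq_of_ne_zero ht, Nat.cast_sub Fintype.card_pos, Nat.cast_one, sub_zero]
    abel

end Fintype

section Field

variable {F : Type*} [Field F] [Fintype F] [DecidableEq F]

theorem sum_GL_fin_two_eq_sum_card_smul {M : Type*} [AddCommMonoid M] (G : F × F → M) :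
    ∑ s : GL (Fin 2) F,
        G ((s : Matrix (Fin 2) (Fin 2) F) 0 0, (s : Matrix (Fin 2) (Fin 2) F) 1 1) =
      ∑ x : F × F, #{y : F × F | y.1 * y.2 ≠ x.1 * x.2} • G x := by
  classical
  rw [sum_units_eq_sum_filter_isUnit (fun m : Matrix (Fin 2) (Fin 2) F => G (m 0 0, m 1 1)),
    sum_filter, ← Fintype.sum_equiv matrixFinTwoEquiv _ _ (fun _ => rfl), Fintype.sum_prod_type]
  refine sum_congr rfl fun x _ => ?_
  rw [← sum_filter]
  change ∑ y with IsUnit (matrixFinTwoEquiv (x, y)), G x = _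
  rw [sum_const]
  congr 3 with y
  simp [matrixFinTwoEquiv, Matrix.isUnit_iff_isUnit_det, Matrix.det_fin_two_of, sub_eq_zero,
    eq_comm]

theorem sum_GL_fin_two_diag {R : Type*} [Ring R] (G : F × F → R) :
    ∑ s : GL (Fin 2) F,
        G ((s : Matrix (Fin 2) (Fin 2) F) 0 0, (s : Matrix (Fin 2) (Fin 2) F) 1 1) =
      ((Fintype.card F : R) ^ 2 - Fintype.card F + 1) * ∑ x, G x -
        Fintype.card F * (∑ d, G (0, d) + ∑ a, G (a, 0) - G (0, 0)) := by
  rw [sum_GL_fin_two_eq_sum_card_smul, ← sum_filter_mul_eq_zero, mul_sum, mul_sum, sum_filter,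
    ← sum_sub_distrib]
  refine sum_congr rfl fun x _ => ?_
  rw [← Nat.cast_smul_eq_nsmul R, natCast_card_filter_mul_ne, smul_eq_mul]
  split_ifs <;> noncomm_ring

end Field

theorem stmt_14 (F : Type) [Field F] [Fintype F] [DecidableEq F]
    (χ : AddChar F ℂ) (hχ : ∃ a : F, χ a ≠ 1) :
    (∑ s : GL (Fin 2) F, χ ((s : Matrix (Fin 2) (Fin 2) F) 0 0) =
        (Fintype.card F : ℂ) - (Fintype.card F : ℂ) ^ 2) ∧
    (∑ s : GL (Fin 2) F,
        χ ((s : Matrix (Fin 2) (Fin 2) F) 0 0 + (s : Matrix (Fin 2) (Fin 2) F) 1 1) =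
        (Fintype.card F : ℂ)) := by
  have hsum : ∑ a, χ a = 0 :=
    AddChar.sum_eq_zero_of_ne_one (by simpa [AddChar.ext_iff] using hχ)
  constructor
  · rw [sum_GL_fin_two_diag (fun x => χ x.1), Fintype.sum_prod_type]
    simp only [sum_const, card_univ, nsmul_eq_mul, ← mul_sum, hsum, mul_zero,
      AddChar.map_zero_eq_one, mul_one, add_zero, zero_sub]
    ring
  · rw [sum_GL_fin_two_diag (fun x => χ (x.1 + x.2)), Fintype.sum_prod_type]
    simp [AddChar.map_add_eq_mul, ← mul_sum, hsum]
end

section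
/- Let q be a prime power. Every matrix in Mat_2(F_q) can be written as a sum of two matrices each of determinant 1. -/
/-!
Subtract from `M = !![a, b; c, d]` the matrix `!![x, -1; 1, 0]`, which has determinant `1` for
every `x`; the remainder `!![a - x, b + 1; c - 1, d]` has determinant linear in `x` with slope
`-d`, so `x` can be chosen to make it `1` when `d ≠ 0`. Relabelling the basis swaps `a` and `d`,
and when `a = d = 0` the matrix is `!![1, b; 0, 1] + !![-1, 0; c, -1]`.
-/

namespace Matrix

variable {R : Type*} [CommRing R]

def IsSumOfTwoDetOne {n : Type*} [Fintype n] [DecidableEq n] (M : Matrix n n R) : Prop :=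
  ∃ A B : Matrix n n R, A.det = 1 ∧ B.det = 1 ∧ M = A + B

theorem IsSumOfTwoDetOne.submatrix {n : Type*} [Fintype n] [DecidableEq n] {M : Matrix n n R}
    (h : IsSumOfTwoDetOne M) (e : n ≃ n) : IsSumOfTwoDetOne (M.submatrix e e) := by
  obtain ⟨A, B, hA, hB, rfl⟩ := h
  exact ⟨A.submatrix e e, B.submatrix e e, by rwa [det_submatrix_equiv_self],
    by rwa [det_submatrix_equiv_self], by ext; simp⟩

theorem isSumOfTwoDetOne_of_isUnit (M : Matrix (Fin 2) (Fin 2) R) (hd : IsUnit (M 1 1)) :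
    IsSumOfTwoDetOne M := by
  obtain ⟨u, hu⟩ := hd
  set y := (1 + (M 0 1 + 1) * (M 1 0 - 1)) * ↑u⁻¹
  refine ⟨!![M 0 0 - y, -1; 1, 0], !![y, M 0 1 + 1; M 1 0 - 1, M 1 1], ?_, ?_, ?_⟩
  · simp [det_fin_two_of]
  · rw [det_fin_two_of, ← hu, mul_assoc, Units.inv_mul, mul_one]
    ring
  · ext i j
    fin_cases i <;> fin_cases j <;> simp

theorem isSumOfTwoDetOne_of_diag_eq_zero (M : Matrix (Fin 2) (Fin 2) R) (ha : M 0 0 = 0)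
    (hd : M 1 1 = 0) : IsSumOfTwoDetOne M :=
  ⟨!![1, M 0 1; 0, 1], !![-1, 0; M 1 0, -1], by simp [det_fin_two_of],
    by simp [det_fin_two_of], by ext i j; fin_cases i <;> fin_cases j <;> simp [ha, hd]⟩

end Matrix

theorem stmt_15_general (F : Type) [Field F] (M : Matrix (Fin 2) (Fin 2) F) :
    ∃ A B : Matrix (Fin 2) (Fin 2) F, A.det = 1 ∧ B.det = 1 ∧ M = A + B := by
  change M.IsSumOfTwoDetOne
  by_cases hd : M 1 1 = 0
  · by_cases ha : M 0 0 = 0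
    · exact Matrix.isSumOfTwoDetOne_of_diag_eq_zero M ha hd
    · let e := Equiv.swap (0 : Fin 2) 1
      have hswap := Matrix.isSumOfTwoDetOne_of_isUnit (M.submatrix e e) (by simpa [e] using ha)
      have hM : (M.submatrix e e).submatrix e e = M := by ext; simp [e]
      exact hM ▸ hswap.submatrix e
  · exact Matrix.isSumOfTwoDetOne_of_isUnit M (Ne.isUnit hd)

theorem stmt_15 (F : Type) [Field F] [Fintype F] (M : Matrix (Fin 2) (Fin 2) F) :
    ∃ A B : Matrix (Fin 2) (Fin 2) F, A.det = 1 ∧ B.det = 1 ∧ M = A + B :=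
  stmt_15_general F M
end

section
/- Let q be a prime power, let χ be a nontrivial additive character of F_q with values in ℂ, and let δ ∈ F_q. Then Σ_{s ∈ SL_2(F_q)} χ(s₁₁ + δ·s₂₂) = q · Σ_{α ∈ F_q, α ≠ 0} χ(α + δ·α⁻¹), where s₁₁ and s₂₂ denote the (1,1)- and (2,2)-entries of s. In particular, Σ_{s ∈ SL_2(F_q)} χ(s₁₁) = −q. -/
/-!
Parametrize `s = !![a, b; c, d] ∈ SL₂(F)` by its diagonal `(a, d)` and the pair `(b, c)` with
`b c = a d - 1`. For each `(a, d)` there are `q - 1` such pairs, plus `q` more when `a d = 1`.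
The contribution of the constant `q - 1` vanishes because `∑ₐ χ(a + x) = 0` for nontrivial `χ`,
and the extra `q` pairs leave `q ∑_{a ≠ 0} χ(a + δ a⁻¹)`. For `δ = 0` this is `q (0 - χ 0) = -q`.
-/

open Finset Matrix

section Counting

variable {F : Type*} [Field F] [Fintype F] [DecidableEq F]

theorem card_filter_mul_left_eq (b t : F) :
    #{c : F | b * c = t} = if b = 0 then (if t = 0 then Fintype.card F else 0) else 1 := by
  split_ifs with hb ht
  · simp [hb, ht]
  · simp [hb, Ne.symm ht]
  · rw [filter_congr fun c _ => (eq_inv_mul_iff_mul_eq₀ hb).symm, filter_eq', if_pos (mem_univ _),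
      card_singleton]

theorem card_filter_mul_eq (t : F) :
    #{y : F × F | y.1 * y.2 = t} = Fintype.card F - 1 + if t = 0 then Fintype.card F else 0 := by
  rw [card_filter, Fintype.sum_prod_type]
  simp_rw [← card_filter, card_filter_mul_left_eq]
  rw [← add_sum_erase _ _ (mem_univ 0), if_pos rfl,
    sum_congr rfl fun x hx => if_neg (ne_of_mem_erase hx), sum_const, card_erase_of_mem (mem_univ 0),
    card_univ, smul_eq_mul, mul_one, add_comm]

theorem sum_sum_ite_mul_eq_one {M : Type*} [AddCommMonoid M] (g : F → F → M) :
    ∑ a, ∑ d, (if a * d = 1 then g a d else 0) = ∑ a ∈ univ.filter (· ≠ 0), g a a⁻¹ := by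
  rw [sum_filter]
  refine sum_congr rfl fun a _ => ?_
  split_ifs with ha
  · simp_rw [mul_eq_one_iff_inv_eq₀ ha, sum_ite_eq, if_pos (mem_univ _)]
  · simp [not_not.mp ha]

end Counting

theorem AddChar.sum_add_right_eq_zero {G R : Type*} [AddGroup G] [Fintype G] [CommRing R]
    [IsDomain R] {ψ : AddChar G R} (hψ : ψ ≠ 1) (x : G) : ∑ a, ψ (a + x) = 0 :=
  (Equiv.sum_comp (Equiv.addRight x) ψ).trans (sum_eq_zero_of_ne_one hψ)

theorem AddChar.sum_ne_zero_eq_neg_one {G R : Type*} [AddGroup G] [Fintype G] [DecidableEq G]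
    [CommRing R] [IsDomain R] {ψ : AddChar G R} (hψ : ψ ≠ 1) :
    ∑ a ∈ univ.filter (· ≠ 0), ψ a = -1 := by
  rw [filter_ne', sum_erase_eq_sub (mem_univ 0), AddChar.sum_eq_zero_of_ne_one hψ,
    AddChar.map_zero_eq_one, zero_sub]

namespace Matrix.SpecialLinearGroup

variable {F : Type*} [Field F]

def finTwoEquivSigma :
    SpecialLinearGroup (Fin 2) F ≃ Σ x : F × F, {y : F × F // y.1 * y.2 = x.1 * x.2 - 1} where
  toFun s := ⟨(s 0 0, s 1 1), (s 0 1, s 1 0), by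
    have hs := s.2
    rw [det_fin_two] at hs
    linear_combination -hs⟩
  invFun p := ⟨!![p.1.1, p.2.1.1; p.2.1.2, p.1.2], by
    rw [det_fin_two_of]
    linear_combination -p.2.2⟩
  left_inv s := by
    ext i j
    fin_cases i <;> fin_cases j <;> rfl
  right_inv p := Sigma.subtype_ext rfl rfl

theorem sum_fin_two_diag [Fintype F] [DecidableEq F] {M : Type*} [AddCommMonoid M]
    (f : F → F → M) :
    ∑ s : SpecialLinearGroup (Fin 2) F, f (s 0 0) (s 1 1) =
      ∑ a, ∑ d, #{y : F × F | y.1 * y.2 = a * d - 1} • f a d := by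
  rw [← finTwoEquivSigma.symm.sum_comp, Fintype.sum_sigma, Fintype.sum_prod_type]
  refine sum_congr rfl fun a _ => sum_congr rfl fun d _ => ?_
  rw [← Fintype.card_subtype, ← card_univ, ← sum_const]
  rfl

theorem sum_addChar_diag [Fintype F] [DecidableEq F] {R : Type*} [CommRing R] [IsDomain R]
    {ψ : AddChar F R} (hψ : ψ ≠ 1) (δ : F) :
    ∑ s : SpecialLinearGroup (Fin 2) F, ψ (s 0 0 + δ * s 1 1) =
      Fintype.card F * ∑ a ∈ univ.filter (· ≠ 0), ψ (a + δ * a⁻¹) := by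
  have h_const : ∑ a, ∑ d, (Fintype.card F - 1) • ψ (a + δ * d) = 0 := by
    rw [sum_comm]
    exact sum_eq_zero fun d _ => by rw [← smul_sum, AddChar.sum_add_right_eq_zero hψ, smul_zero]
  rw [sum_fin_two_diag fun a d => ψ (a + δ * d), mul_sum,
    ← sum_sum_ite_mul_eq_one fun a d => (Fintype.card F : R) * ψ (a + δ * d)]
  simp_rw [card_filter_mul_eq, sub_eq_zero, add_smul, sum_add_distrib, h_const, zero_add, ite_smul,
    zero_smul, nsmul_eq_mul]

end Matrix.SpecialLinearGroup

theorem stmt_18 (F : Type) [Field F] [Fintype F] [DecidableEq F]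
    (χ : AddChar F ℂ) (hχ : ∃ a : F, χ a ≠ 1) (δ : F) :
    (∑ s : Matrix.SpecialLinearGroup (Fin 2) F,
        χ ((s : Matrix (Fin 2) (Fin 2) F) 0 0 + δ * (s : Matrix (Fin 2) (Fin 2) F) 1 1) =
      (Fintype.card F : ℂ) *
        ∑ a ∈ Finset.univ.filter (fun a : F => a ≠ 0), χ (a + δ * a⁻¹)) ∧
    (∑ s : Matrix.SpecialLinearGroup (Fin 2) F,
        χ ((s : Matrix (Fin 2) (Fin 2) F) 0 0) = -(Fintype.card F : ℂ)) := by
  have hχ : χ ≠ 1 := AddChar.ne_one_iff.mpr hχ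
  refine ⟨SpecialLinearGroup.sum_addChar_diag hχ δ, ?_⟩
  simpa [AddChar.sum_ne_zero_eq_neg_one hχ] using SpecialLinearGroup.sum_addChar_diag hχ 0
end

section
/- Let H be a finite abelian (additive) group, let S be a nonempty subset of H, and let m ≥ 0 be a real number such that for every nontrivial additive character χ : H → ℂ one has ‖Σ_{s ∈ S} χ(s)‖ ≤ m. If X and Y are subsets of H satisfying √(|X|·|Y|) > |H|·m/|S|, then there exist x ∈ X and y ∈ Y with y − x ∈ S. In particular, if |X| > |H|·m/|S|, then there exist two (not necessarily distinct) elements x, x′ ∈ X with x′ − x ∈ S. -/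
/-!
Write `Â ψ = ∑ a ∈ A, ψ a`. By orthogonality of characters, `∑ ψ, Ŷ ψ * conj (X̂ ψ * Ŝ ψ)` is
`|H|` times the number of solutions of `y = x + s`, so it vanishes when there are none. Then the
term `|X| |Y| |S|` of the trivial character is cancelled by the others, which are bounded by
`m ∑ ψ, ‖Ŷ ψ‖ ‖X̂ ψ‖ ≤ m |H| √(|X| |Y|)` (Cauchy–Schwarz and Parseval).
-/

open Finset ComplexConjugate

namespace AddChar

variable {H : Type*} [AddCommGroup H] [Fintype H]

lemma sum_mul_conj_sum_eq_card_mul_card_filter {ι κ : Type*} [DecidableEq H]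
    (I : Finset ι) (J : Finset κ) (f : ι → H) (g : κ → H) :
    ∑ ψ : AddChar H ℂ, (∑ i ∈ I, ψ (f i)) * conj (∑ j ∈ J, ψ (g j)) =
      Fintype.card H * #{p ∈ I ×ˢ J | f p.1 = g p.2} := by
  have hψ (ψ : AddChar H ℂ) : (∑ i ∈ I, ψ (f i)) * conj (∑ j ∈ J, ψ (g j)) =
      ∑ p ∈ I ×ˢ J, ψ (f p.1 - g p.2) := by
    simp only [map_sum, sum_mul_sum, sum_product, ← map_neg_eq_conj, ← map_add_eq_mul,
      sub_eq_add_neg]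
  simp_rw [hψ]
  rw [sum_comm]
  simp only [sum_apply_eq_ite, sub_eq_zero, sum_ite, sum_const_zero, add_zero, sum_const,
    nsmul_eq_mul, mul_comm]

lemma sum_norm_sum_sq (A : Finset H) :
    ∑ ψ : AddChar H ℂ, ‖∑ a ∈ A, ψ a‖ ^ 2 = Fintype.card H * (#A : ℝ) := by
  classical
  have h := sum_mul_conj_sum_eq_card_mul_card_filter A A id id
  simp only [id_eq, Complex.mul_conj'] at h
  rw [← diag_card A, diag_eq_filter]
  exact_mod_cast h

lemma sum_norm_sum_mul_norm_sum_le (X Y : Finset H) :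
    ∑ ψ : AddChar H ℂ, ‖∑ y ∈ Y, ψ y‖ * ‖∑ x ∈ X, ψ x‖ ≤
      Fintype.card H * √(#X * #Y) := by
  calc _ ≤ √(∑ ψ : AddChar H ℂ, ‖∑ y ∈ Y, ψ y‖ ^ 2) *
        √(∑ ψ : AddChar H ℂ, ‖∑ x ∈ X, ψ x‖ ^ 2) := Real.sum_mul_le_sqrt_mul_sqrt _ _ _
    _ = Fintype.card H * √(#X * #Y) := by
        rw [sum_norm_sum_sq, sum_norm_sum_sq, ← Real.sqrt_mul (by positivity),
          show (Fintype.card H * #Y : ℝ) * (Fintype.card H * #X) =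
            (Fintype.card H) ^ 2 * (#X * #Y) by ring,
          Real.sqrt_mul (by positivity), Real.sqrt_sq (by positivity)]

lemma sum_sum_mul_conj_sum_mul_sum_eq_zero {X Y S : Finset H}
    (hXYS : ∀ x ∈ X, ∀ y ∈ Y, y - x ∉ S) :
    ∑ ψ : AddChar H ℂ, (∑ y ∈ Y, ψ y) * conj ((∑ x ∈ X, ψ x) * ∑ s ∈ S, ψ s) = 0 := by
  classical
  have hψ (ψ : AddChar H ℂ) : (∑ x ∈ X, ψ x) * ∑ s ∈ S, ψ s = ∑ p ∈ X ×ˢ S, ψ (p.1 + p.2) := by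
    simp only [sum_mul_sum, sum_product, map_add_eq_mul]
  simp_rw [hψ]
  have h := sum_mul_conj_sum_eq_card_mul_card_filter Y (X ×ˢ S) id fun p ↦ p.1 + p.2
  simp only [id_eq] at h
  rw [h]
  suffices {p ∈ Y ×ˢ (X ×ˢ S) | p.1 = p.2.1 + p.2.2} = ∅ by simp [this]
  refine filter_eq_empty_iff.2 fun ⟨y, x, s⟩ hp hys ↦ ?_
  obtain ⟨hy, hx, hs⟩ : y ∈ Y ∧ x ∈ X ∧ s ∈ S := by simpa only [mem_product] using hp
  exact hXYS x hx y hy (by rwa [show y = x + s from hys, add_sub_cancel_left])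

variable {S : Finset H} {m : ℝ}

lemma card_mul_card_mul_card_le_of_forall_sub_notMem (hm : 0 ≤ m)
    (hS : ∀ ψ : AddChar H ℂ, ψ ≠ 0 → ‖∑ s ∈ S, ψ s‖ ≤ m) {X Y : Finset H}
    (hXYS : ∀ x ∈ X, ∀ y ∈ Y, y - x ∉ S) :
    (#Y * (#X * #S) : ℝ) ≤ m * ∑ ψ : AddChar H ℂ, ‖∑ y ∈ Y, ψ y‖ * ‖∑ x ∈ X, ψ x‖ := by
  classical
  set F : AddChar H ℂ → ℂ := fun ψ ↦ (∑ y ∈ Y, ψ y) * conj ((∑ x ∈ X, ψ x) * ∑ s ∈ S, ψ s)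
  have hF0 : F 0 = -∑ ψ ∈ univ.erase 0, F ψ :=
    eq_neg_of_add_eq_zero_left <| (add_sum_erase _ F (mem_univ 0)).trans
      (sum_sum_mul_conj_sum_mul_sum_eq_zero hXYS)
  have hF (ψ : AddChar H ℂ) (hψ : ψ ≠ 0) : ‖F ψ‖ ≤ m * (‖∑ y ∈ Y, ψ y‖ * ‖∑ x ∈ X, ψ x‖) := by
    simp only [F, norm_mul, Complex.norm_conj]
    have := mul_le_mul_of_nonneg_left (hS ψ hψ)
      (by positivity : 0 ≤ ‖∑ y ∈ Y, ψ y‖ * ‖∑ x ∈ X, ψ x‖)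
    linarith
  calc (#Y * (#X * #S) : ℝ) = ‖F 0‖ := by simp [F]
    _ ≤ ∑ ψ ∈ univ.erase (0 : AddChar H ℂ), ‖F ψ‖ := by rw [hF0, norm_neg]; exact norm_sum_le _ _
    _ ≤ ∑ ψ ∈ univ.erase (0 : AddChar H ℂ), m * (‖∑ y ∈ Y, ψ y‖ * ‖∑ x ∈ X, ψ x‖) :=
        sum_le_sum fun ψ hψ ↦ hF ψ (ne_of_mem_erase hψ)
    _ ≤ ∑ ψ : AddChar H ℂ, m * (‖∑ y ∈ Y, ψ y‖ * ‖∑ x ∈ X, ψ x‖) :=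
        sum_le_sum_of_subset_of_nonneg (erase_subset _ _) fun _ _ _ ↦ by positivity
    _ = m * ∑ ψ : AddChar H ℂ, ‖∑ y ∈ Y, ψ y‖ * ‖∑ x ∈ X, ψ x‖ := (mul_sum ..).symm

lemma card_mul_sqrt_card_mul_card_le_of_forall_sub_notMem (hm : 0 ≤ m)
    (hS : ∀ ψ : AddChar H ℂ, ψ ≠ 0 → ‖∑ s ∈ S, ψ s‖ ≤ m) {X Y : Finset H}
    (hXYS : ∀ x ∈ X, ∀ y ∈ Y, y - x ∉ S) :
    #S * √(#X * #Y) ≤ Fintype.card H * m := by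
  have hq : √(#X * #Y : ℝ) ^ 2 = #X * #Y := Real.sq_sqrt (by positivity)
  rcases (Real.sqrt_nonneg (#X * #Y : ℝ)).eq_or_lt with hq0 | hq0
  · rw [← hq0, mul_zero]; positivity
  refine le_of_mul_le_mul_left ?_ hq0
  calc √(#X * #Y : ℝ) * (#S * √(#X * #Y)) = #Y * (#X * #S) := by
        linear_combination (#S : ℝ) * hq
    _ ≤ m * (Fintype.card H * √(#X * #Y)) :=
        (card_mul_card_mul_card_le_of_forall_sub_notMem hm hS hXYS).trans
          (mul_le_mul_of_nonneg_left (sum_norm_sum_mul_norm_sum_le X Y) hm)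
    _ = √(#X * #Y : ℝ) * (Fintype.card H * m) := by ring

lemma exists_sub_mem_of_card_mul_lt_card_mul_sqrt (hm : 0 ≤ m)
    (hS : ∀ ψ : AddChar H ℂ, ψ ≠ 0 → ‖∑ s ∈ S, ψ s‖ ≤ m) {X Y : Finset H}
    (hXY : Fintype.card H * m < #S * √(#X * #Y)) :
    ∃ x ∈ X, ∃ y ∈ Y, y - x ∈ S := by
  by_contra! hXYS
  exact hXY.not_ge (card_mul_sqrt_card_mul_card_le_of_forall_sub_notMem hm hS hXYS)

end AddChar

open AddChar

theorem stmt_19 (H : Type) [AddCommGroup H] [Fintype H]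
    (S : Finset H) (hS : S.Nonempty) (m : ℝ) (hm : 0 ≤ m)
    (hbound : ∀ χ : AddChar H ℂ, (∃ h : H, χ h ≠ 1) → ‖∑ s ∈ S, χ s‖ ≤ m)
    (X Y : Finset H) :
    (Real.sqrt ((X.card : ℝ) * (Y.card : ℝ)) > (Fintype.card H : ℝ) * m / (S.card : ℝ) →
      ∃ x ∈ X, ∃ y ∈ Y, y - x ∈ S) ∧
    ((X.card : ℝ) > (Fintype.card H : ℝ) * m / (S.card : ℝ) →
      ∃ x ∈ X, ∃ x' ∈ X, x' - x ∈ S) := by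
  have hbound₀ (ψ : AddChar H ℂ) (hψ : ψ ≠ 0) : ‖∑ s ∈ S, ψ s‖ ≤ m :=
    hbound ψ (ne_zero_iff.1 hψ)
  have hS_pos : (0 : ℝ) < #S := by exact_mod_cast hS.card_pos
  have key (X Y : Finset H) (hXY : Fintype.card H * m / #S < √(#X * #Y)) :
      ∃ x ∈ X, ∃ y ∈ Y, y - x ∈ S :=
    exists_sub_mem_of_card_mul_lt_card_mul_sqrt hm hbound₀ <| by
      rw [div_lt_iff₀ hS_pos] at hXY; linarith
  refine ⟨key X Y, fun hX ↦ key X X ?_⟩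
  rwa [Real.sqrt_mul_self (Nat.cast_nonneg _)]
end
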